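/- Let m ≥ 2. Define vector fields Y_1(t) := (0, t_1+1, 2t_2, 3t_3, …, (m−1)t_{m−1}) on ℂ^m and Y_k := δ_{k−1} ∘ Y_1 (pointwise truncated product) for 2 ≤ k ≤ m−1. Then for every 1 ≤ k ≤ m−1: L_{Y_k}(∘)(Z,W) = 0 for all differentiable vector fields Z, W, and [Y_k, E] = 0. That is, each Y_k is an infinitesimal symmetry of the standard model (ℂ^m, ∘, e, E). -/

import Mathlib

open scoped BigOperators

noncomputable section

/-- The truncated-polynomial multiplication on `ℂ^m ≅ ℂ[X]/(X^m)`: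
`(u ∘ v)_k = Σ_{i+j=k} u_i v_j`. -/
def tmul {m : ℕ} (u v : Fin m → ℂ) : Fin m → ℂ :=
  fun k => ∑ i : Fin m, ∑ j : Fin m,
    if (i : ℕ) + (j : ℕ) = (k : ℕ) then u i * v j else 0

/-- The `i`-th standard basis vector of `ℂ^m` (zero if `i ≥ m`); `std 0` is the unit `e`. -/
def std {m : ℕ} (i : ℕ) : Fin m → ℂ := fun j => if (j : ℕ) = i then 1 else 0

/-- Lie bracket of vector fields on `ℂ^m`: `[X,Y](p) = DY(p)(X(p)) − DX(p)(Y(p))`. -/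
def bracket {m : ℕ} (X Y : (Fin m → ℂ) → Fin m → ℂ) : (Fin m → ℂ) → Fin m → ℂ :=
  fun p => fderiv ℂ Y p (X p) - fderiv ℂ X p (Y p)

/-- Pointwise truncated product of vector fields. -/
def pmul {m : ℕ} (X Y : (Fin m → ℂ) → Fin m → ℂ) : (Fin m → ℂ) → Fin m → ℂ :=
  fun p => tmul (X p) (Y p)

/-- Lie derivative of the multiplication `∘` along `X`:
`L_X(∘)(Y,Z) = [X, Y∘Z] − [X,Y]∘Z − Y∘[X,Z]`. -/
def lieD {m : ℕ} (X Y Z : (Fin m → ℂ) → Fin m → ℂ) : (Fin m → ℂ) → Fin m → ℂ :=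
  fun p => bracket X (pmul Y Z) p - tmul (bracket X Y p) (Z p) - tmul (Y p) (bracket X Z p)

/-- The Euler field `E(t) = (t_0 + a, t_1 + 1, t_2, …, t_{m−1})`. -/
def Efield {m : ℕ} (a : ℂ) : (Fin m → ℂ) → Fin m → ℂ :=
  fun p => p + a • std 0 + std 1

/-- The vector field `Y_1(t) = (0, t_1+1, 2t_2, 3t_3, …, (m−1)t_{m−1})`. -/
def Yone {m : ℕ} : (Fin m → ℂ) → Fin m → ℂ :=
  fun p j => if (j : ℕ) = 1 then p j + 1 else ((j : ℕ) : ℂ) * p j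

/-- The infinitesimal symmetries `Y_1` and `Y_k := δ_{k−1} ∘ Y_1` for `k ≥ 2`. -/
def Ysym {m : ℕ} : ℕ → (Fin m → ℂ) → Fin m → ℂ
  | 1 => Yone
  | k => fun p => tmul (std (k - 1)) (Yone p)

/-!
Write `D` for the diagonal operator multiplying the `i`-th coordinate by `i`. Then
`Y_k(t) = δ_{k-1} ∘ (D t + δ_1)` for every `k`, so `Y_k` is affine with constant derivative
`c ∘ D`, `c = δ_{k-1}`. Under the multiplicative embedding of `ℂ^m` into `ℂ⟦X⟧ ⧸ (X^m)` the
operator `D` is `X d/dX`, a derivation of `∘`, and so is `c ∘ D`. For a vector field `X` whose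
derivative is a constant derivation `A`, the terms of `L_X(∘)(Z,W)` containing derivatives of
`Z` and `W` cancel by the Leibniz rule for `∘`, leaving `-A(Z∘W) + AZ∘W + Z∘AW = 0`. Finally
`[Y_k, E] = Y_k - c ∘ D(E) = 0` because `D δ_0 = 0` and `D δ_1 = δ_1`.
-/

open PowerSeries Finset

section

variable {m : ℕ}

lemma tmul_add_left (u u' v : Fin m → ℂ) : tmul (u + u') v = tmul u v + tmul u' v := by
  ext k; simp [tmul, add_mul, sum_add_distrib, ite_add_zero]

lemma tmul_add_right (u v v' : Fin m → ℂ) : tmul u (v + v') = tmul u v + tmul u v' := by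
  ext k; simp [tmul, mul_add, sum_add_distrib, ite_add_zero]

lemma tmul_smul_left (c : ℂ) (u v : Fin m → ℂ) : tmul (c • u) v = c • tmul u v := by
  ext k; simp [tmul, mul_sum, mul_assoc]

lemma tmul_smul_right (c : ℂ) (u v : Fin m → ℂ) : tmul u (c • v) = c • tmul u v := by
  ext k; simp [tmul, mul_sum, mul_left_comm]

def toPowerSeries (u : Fin m → ℂ) : ℂ⟦X⟧ :=
  PowerSeries.mk fun i => if h : i < m then u ⟨i, h⟩ else 0

lemma coeff_toPowerSeries (u : Fin m → ℂ) (i : Fin m) : coeff i (toPowerSeries u) = u i := by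
  simp [toPowerSeries]

lemma tmul_apply_eq_coeff_mul (u v : Fin m → ℂ) (k : Fin m) :
    tmul u v k = coeff k (toPowerSeries u * toPowerSeries v) := by
  have hk := k.isLt
  have hanti : antidiagonal (k : ℕ) =
      (range m ×ˢ range m).filter fun p : ℕ × ℕ => p.1 + p.2 = k := by
    ext ⟨i, j⟩
    simp only [HasAntidiagonal.mem_antidiagonal, mem_filter, mem_product, mem_range]
    omega
  rw [coeff_mul, hanti, sum_filter, sum_product, tmul]
  simp only [← Fin.sum_univ_eq_sum_range (fun j => _), coeff_toPowerSeries]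

def toTruncated (u : Fin m → ℂ) : ℂ⟦X⟧ ⧸ Ideal.span {(X : ℂ⟦X⟧) ^ m} :=
  Ideal.Quotient.mk _ (toPowerSeries u)

lemma toTruncated_eq_iff (f : ℂ⟦X⟧) (u : Fin m → ℂ) :
    Ideal.Quotient.mk _ f = toTruncated u ↔ ∀ k : Fin m, coeff k f = u k := by
  rw [toTruncated, Ideal.Quotient.mk_eq_mk_iff_sub_mem, Ideal.mem_span_singleton, X_pow_dvd_iff]
  refine ⟨fun h k => ?_, fun h n hn => ?_⟩
  · rw [← coeff_toPowerSeries u k, ← sub_eq_zero, ← map_sub, h k k.isLt]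
  · rw [map_sub, h ⟨n, hn⟩, ← coeff_toPowerSeries u ⟨n, hn⟩, sub_self]

lemma toTruncated_injective : Function.Injective (toTruncated (m := m)) := by
  intro u v h
  funext k
  rw [← coeff_toPowerSeries u k]
  exact (toTruncated_eq_iff _ v).mp h k

lemma toTruncated_tmul (u v : Fin m → ℂ) :
    toTruncated (tmul u v) = toTruncated u * toTruncated v := by
  refine ((toTruncated_eq_iff _ _).mpr fun k => ?_).symm.trans (map_mul _ _ _)
  exact (tmul_apply_eq_coeff_mul u v k).symm

lemma toTruncated_std_zero : toTruncated (std 0 : Fin m → ℂ) = 1 := by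
  rw [← map_one (Ideal.Quotient.mk _), eq_comm, toTruncated_eq_iff]
  intro k
  simp [coeff_one, std]

lemma tmul_comm (u v : Fin m → ℂ) : tmul u v = tmul v u :=
  toTruncated_injective <| by rw [toTruncated_tmul, toTruncated_tmul, mul_comm]

lemma tmul_assoc (u v w : Fin m → ℂ) : tmul (tmul u v) w = tmul u (tmul v w) :=
  toTruncated_injective <| by simp only [toTruncated_tmul, mul_assoc]

lemma std_zero_tmul (u : Fin m → ℂ) : tmul (std 0) u = u :=
  toTruncated_injective <| by rw [toTruncated_tmul, toTruncated_std_zero, one_mul]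

def tmulCLM : (Fin m → ℂ) →L[ℂ] (Fin m → ℂ) →L[ℂ] (Fin m → ℂ) :=
  LinearMap.toContinuousLinearMap <| LinearMap.toContinuousLinearMap.toLinearMap ∘ₗ
    LinearMap.mk₂ ℂ tmul tmul_add_left tmul_smul_left tmul_add_right tmul_smul_right

@[simp]
lemma tmulCLM_apply (u v : Fin m → ℂ) : tmulCLM u v = tmul u v := rfl

lemma tmul_sub_left (u u' v : Fin m → ℂ) : tmul (u - u') v = tmul u v - tmul u' v :=
  tmulCLM.map_sub₂ u u' v

lemma tmul_sub_right (u v v' : Fin m → ℂ) : tmul u (v - v') = tmul u v - tmul u v' :=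
  map_sub (tmulCLM u) v v'

def deg : (Fin m → ℂ) →L[ℂ] (Fin m → ℂ) :=
  ContinuousLinearMap.pi fun j => ((j : ℕ) : ℂ) • ContinuousLinearMap.proj j

lemma deg_apply (u : Fin m → ℂ) (j : Fin m) : deg u j = (j : ℕ) * u j := rfl

lemma deg_tmul (u v : Fin m → ℂ) : deg (tmul u v) = tmul (deg u) v + tmul u (deg v) := by
  ext k
  simp only [deg_apply, tmul, Pi.add_apply, mul_sum, ← sum_add_distrib]
  refine sum_congr rfl fun i _ => sum_congr rfl fun j _ => ?_
  split_ifs with h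
  · rw [← h]; push_cast; ring
  · simp

lemma deg_std_zero : deg (std 0 : Fin m → ℂ) = 0 := by
  ext j; by_cases h : (j : ℕ) = 0 <;> simp [deg_apply, std, h]

lemma deg_std_one : deg (std 1 : Fin m → ℂ) = std 1 := by
  ext j; by_cases h : (j : ℕ) = 1 <;> simp [deg_apply, std, h]

lemma Yone_eq_deg_add (p : Fin m → ℂ) : Yone p = deg p + std 1 := by
  ext j; by_cases h : (j : ℕ) = 1 <;> simp [Yone, deg_apply, std, h]

-- `0 - 1 = 0` in `ℕ`, so the case `k = 0` is covered too.
lemma Ysym_eq_tmul (k : ℕ) :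
    (Ysym k : (Fin m → ℂ) → Fin m → ℂ) = fun p => tmul (std (k - 1)) (Yone p) := by
  match k with
  | 1 => funext p; exact (std_zero_tmul _).symm
  | 0 | k + 2 => rfl

lemma hasFDerivAt_Ysym (k : ℕ) (p : Fin m → ℂ) :
    HasFDerivAt (Ysym k) ((tmulCLM (std (k - 1))).comp deg) p := by
  have hYone : HasFDerivAt Yone deg p := by
    simpa only [funext Yone_eq_deg_add] using deg.hasFDerivAt.add_const (std 1)
  rw [Ysym_eq_tmul]
  exact (tmulCLM (std (k - 1))).hasFDerivAt.comp p hYone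

lemma fderiv_pmul_apply {Z W : (Fin m → ℂ) → Fin m → ℂ} {p : Fin m → ℂ}
    (hZ : DifferentiableAt ℂ Z p) (hW : DifferentiableAt ℂ W p) (v : Fin m → ℂ) :
    fderiv ℂ (pmul Z W) p v = tmul (fderiv ℂ Z p v) (W p) + tmul (Z p) (fderiv ℂ W p v) := by
  rw [show pmul Z W = fun q => tmulCLM (Z q) (W q) from rfl,
    ContinuousLinearMap.fderiv_of_bilinear tmulCLM hZ hW]
  simp [add_comm]

lemma lieD_eq_zero_of_hasFDerivAt {X Z W : (Fin m → ℂ) → Fin m → ℂ}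
    {A : (Fin m → ℂ) →L[ℂ] (Fin m → ℂ)} (hX : ∀ p, HasFDerivAt X A p)
    (hA : ∀ u v, A (tmul u v) = tmul (A u) v + tmul u (A v))
    (hZ : Differentiable ℂ Z) (hW : Differentiable ℂ W) : lieD X Z W = 0 := by
  funext p
  simp only [lieD, bracket, (hX p).fderiv, fderiv_pmul_apply (hZ p) (hW p), pmul, hA,
    tmul_sub_left, tmul_sub_right, Pi.zero_apply]
  abel

lemma bracket_Efield_apply {X : (Fin m → ℂ) → Fin m → ℂ} {A : (Fin m → ℂ) →L[ℂ] (Fin m → ℂ)}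
    (a : ℂ) (p : Fin m → ℂ) (hX : HasFDerivAt X A p) :
    bracket X (Efield a) p = X p - A (Efield a p) := by
  have hE : HasFDerivAt (Efield a) (ContinuousLinearMap.id ℂ (Fin m → ℂ)) p := by
    rw [show Efield a = fun q => q + (a • std 0 + std 1) from funext fun q => add_assoc _ _ _]
    exact (hasFDerivAt_id p).add_const _
  rw [bracket, hE.fderiv, hX.fderiv, ContinuousLinearMap.id_apply]

lemma tmul_deg_tmul (c u v : Fin m → ℂ) :
    tmul c (deg (tmul u v)) = tmul (tmul c (deg u)) v + tmul u (tmul c (deg v)) := by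
  rw [deg_tmul, tmul_add_right, ← tmul_assoc c (deg u), ← tmul_assoc c u, tmul_comm c u,
    tmul_assoc u c]

end

theorem stmt5_general {m : ℕ} (a : ℂ) (k : ℕ) :
    (∀ Z W : (Fin m → ℂ) → Fin m → ℂ, Differentiable ℂ Z → Differentiable ℂ W →
        lieD (Ysym k) Z W = 0) ∧
      bracket (Ysym k) (Efield a) = (0 : (Fin m → ℂ) → Fin m → ℂ) := by
  refine ⟨fun Z W hZ hW => lieD_eq_zero_of_hasFDerivAt (hasFDerivAt_Ysym k)
    (tmul_deg_tmul _) hZ hW, funext fun p => ?_⟩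
  rw [bracket_Efield_apply a p (hasFDerivAt_Ysym k p), Ysym_eq_tmul]
  simp [Efield, Yone_eq_deg_add, deg_std_zero, deg_std_one]

/-- Each `Y_k`, `1 ≤ k ≤ m−1`, is an infinitesimal symmetry of the standard
model `(ℂ^m, ∘, e, E)`: `L_{Y_k}(∘)(Z,W) = 0` for all differentiable vector fields `Z, W`,
and `[Y_k, E] = 0`. -/
theorem stmt5 {m : ℕ} (hm : 2 ≤ m) (a : ℂ) (k : ℕ) (hk1 : 1 ≤ k) (hk2 : k ≤ m - 1) :
    (∀ Z W : (Fin m → ℂ) → Fin m → ℂ, Differentiable ℂ Z → Differentiable ℂ W →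
        lieD (Ysym k) Z W = 0) ∧
      bracket (Ysym k) (Efield a) = (0 : (Fin m → ℂ) → Fin m → ℂ) :=
  stmt5_general a k
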